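/- arXiv:2010.04831 — 4 statements merged into one kernel-verified Lean document; each statement's English description precedes it below -/
import Mathlib

section
/- Let X ~ MaxGumbel(μx, β) and Y ~ MinGumbel(μy, β) be independent with β > 0. Then E[max(Y - X, 0)] = 2β·K₀(2·e^{(μx - μy)/(2β)}), where K₀ is the modified Bessel function of the second kind of order 0. -/
open MeasureTheory

/-- Density of a MaxGumbel(μ, β) random variable. -/
noncomputable def maxGumbelPDF (μ β x : ℝ) : ℝ :=
  (1 / β) * Real.exp (-(x - μ) / β - Real.exp (-(x - μ) / β))

/-- Density of a MinGumbel(μ, β) random variable. -/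
noncomputable def minGumbelPDF (μ β y : ℝ) : ℝ :=
  (1 / β) * Real.exp ((y - μ) / β - Real.exp ((y - μ) / β))

/-- Modified Bessel function of the second kind of order zero,
K₀(z) = ∫₀^∞ exp(-z cosh u) du. -/
noncomputable def besselK0 (z : ℝ) : ℝ :=
  ∫ u in Set.Ioi (0 : ℝ), Real.exp (-z * Real.cosh u)

/-!
Writing `(Y - X)⁺ = ∫₀^∞ 1{Y > X + q} dq`, the expectation is `∫₀^∞ ∫ f_X(x) P(Y > x + q) dx dq`,
where `P(Y > t) = exp (-e^{(t - μy)/β})`. The substitution `x = (μx + μy - q)/2 - β u` turns the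
inner integral into `∫ e^{b+u} exp (-2 e^b cosh u) du` with `b = (μx - μy + q)/(2β)`
(`gumbelKernel`). As `u ↦ -u` preserves the integral over `u`, `e^{b+u}` may be replaced by
`e^b cosh u`, which is `β` times the `q`-derivative of `2 e^b cosh u`. Hence the `q`-integral is
`β exp (-z cosh u)` with `z = 2 e^{(μx - μy)/(2β)}`, and `∫_ℝ exp (-z cosh u) du = 2 K₀(z)`
by evenness.
-/

open Set Real Filter Topology
open scoped ENNReal

theorem lintegral_ofReal_sub_mul (x : ℝ) {h : ℝ → ℝ≥0∞} (hh : Measurable h) :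
    ∫⁻ y, ENNReal.ofReal (y - x) * h y = ∫⁻ q in Ioi 0, ∫⁻ y in Ioi (x + q), h y := by
  have hlayer : ∀ y, ENNReal.ofReal (y - x) * h y =
      ∫⁻ q in Ioi 0, (Ioi (x + q)).indicator h y := by
    intro y
    have hind : ∀ q, (Ioi (x + q)).indicator h y = (Iio (y - x)).indicator (fun _ ↦ h y) q := by
      intro q
      simp only [indicator, mem_Ioi, mem_Iio, lt_sub_iff_add_lt']
    simp_rw [hind, lintegral_indicator measurableSet_Iio, setLIntegral_const,
      Measure.restrict_apply measurableSet_Iio, Iio_inter_Ioi, Real.volume_Ioo, sub_zero, mul_comm]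
  have hmeas : Measurable (Function.uncurry fun y q : ℝ ↦ (Ioi (x + q)).indicator h y) := by
    have : (Function.uncurry fun y q : ℝ ↦ (Ioi (x + q)).indicator h y) =
        {p : ℝ × ℝ | x + p.2 < p.1}.indicator (h ∘ Prod.fst) := by
      ext p; simp [indicator, Function.uncurry]
    rw [this]
    exact (hh.comp measurable_fst).indicator (measurableSet_lt (by fun_prop) measurable_fst)
  simp_rw [hlayer]
  rw [lintegral_lintegral_swap hmeas.aemeasurable]
  simp_rw [lintegral_indicator measurableSet_Ioi]

theorem lintegral_Ioi_deriv_mul_exp_neg {F F' : ℝ → ℝ} {a : ℝ}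
    (hF : ∀ t ∈ Ici a, HasDerivAt F (F' t) t) (hF' : ∀ t ∈ Ioi a, 0 ≤ F' t)
    (hlim : Tendsto F atTop atTop) :
    ∫⁻ t in Ioi a, ENNReal.ofReal (F' t * exp (-F t)) = ENNReal.ofReal (exp (-F a)) := by
  have hG : ∀ t ∈ Ici a, HasDerivAt (fun s ↦ -exp (-F s)) (F' t * exp (-F t)) t := fun t ht ↦ by
    have h := ((hF t ht).neg.exp).neg
    rwa [mul_neg, neg_neg, mul_comm] at h
  have hnn : ∀ t ∈ Ioi a, 0 ≤ F' t * exp (-F t) := fun t ht ↦ mul_nonneg (hF' t ht) (exp_pos _).le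
  have hGlim : Tendsto (fun s ↦ -exp (-F s)) atTop (𝓝 0) := by
    simpa using (tendsto_exp_neg_atTop_nhds_zero.comp hlim).neg
  rw [← ofReal_integral_eq_lintegral_ofReal (integrableOn_Ioi_deriv_of_nonneg' hG hnn hGlim)
    ((ae_restrict_iff' measurableSet_Ioi).2 (Eventually.of_forall hnn)),
    integral_Ioi_of_hasDerivAt_of_nonneg' hG hnn hGlim, zero_sub, neg_neg]

theorem lintegral_comp_mul_left {a : ℝ} (ha : a ≠ 0) {φ : ℝ → ℝ≥0∞} (hφ : Measurable φ) :
    ∫⁻ x, φ (a * x) = ENNReal.ofReal |a⁻¹| * ∫⁻ x, φ x := by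
  rw [← lintegral_map hφ (measurable_const_mul a), Real.map_volume_mul_left ha,
    lintegral_smul_measure, smul_eq_mul]

theorem lintegral_eq_of_add_comp_neg {F G : ℝ → ℝ≥0∞} (hF : Measurable F)
    (h : ∀ u, F u + F (-u) = 2 * G u) : ∫⁻ u, F u = ∫⁻ u, G u := by
  refine (ENNReal.mul_right_inj two_ne_zero ENNReal.ofNat_ne_top).1 ?_
  calc 2 * ∫⁻ u, F u = (∫⁻ u, F u) + ∫⁻ u, F (-u) := by rw [lintegral_neg_eq_self F, two_mul]
    _ = 2 * ∫⁻ u, G u := by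
      rw [← lintegral_add_left hF, lintegral_congr h, lintegral_const_mul' _ _ ENNReal.ofNat_ne_top]

theorem lintegral_max_sub_mul_mul {f g : ℝ → ℝ} (hf : Measurable f) (hg : Measurable g)
    (hf_nonneg : 0 ≤ f) :
    ∫⁻ p : ℝ × ℝ, ENNReal.ofReal (max (p.2 - p.1) 0 * f p.1 * g p.2) =
      ∫⁻ x, ENNReal.ofReal (f x) * ∫⁻ q in Ioi 0, ∫⁻ y in Ioi (x + q), ENNReal.ofReal (g y) := by
  have hsplit : ∀ x y, ENNReal.ofReal (max (y - x) 0 * f x * g y) =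
      ENNReal.ofReal (f x) * (ENNReal.ofReal (y - x) * ENNReal.ofReal (g y)) := fun x y ↦ by
    rw [ENNReal.ofReal_mul (mul_nonneg (le_max_right _ _) (hf_nonneg x)),
      ENNReal.ofReal_mul (le_max_right _ _), ENNReal.ofReal_max, ENNReal.ofReal_zero, max_zero]
    ring
  have hmeas : Measurable fun p : ℝ × ℝ ↦ ENNReal.ofReal (max (p.2 - p.1) 0 * f p.1 * g p.2) := by
    fun_prop
  rw [Measure.volume_eq_prod, lintegral_prod _ hmeas.aemeasurable]
  refine lintegral_congr fun x ↦ ?_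
  simp_rw [hsplit]
  rw [lintegral_const_mul _ (by fun_prop), lintegral_ofReal_sub_mul x (by fun_prop)]

theorem integrable_exp_neg_mul_cosh {z : ℝ} (hz : 0 < z) :
    Integrable fun u ↦ exp (-z * cosh u) := by
  refine (integrable_exp_neg_mul_sq (b := z / 4) (by positivity)).mono' (by fun_prop)
    (Eventually.of_forall fun u ↦ ?_)
  have hcosh : u ^ 2 / 4 ≤ cosh u := by
    have hexp := quadratic_le_exp_of_nonneg (abs_nonneg u)
    rw [sq_abs] at hexp
    rw [← cosh_abs, cosh_eq]
    linarith [abs_nonneg u, exp_pos (-|u|)]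
  rw [norm_of_nonneg (exp_pos _).le, exp_le_exp]
  nlinarith

theorem integral_exp_neg_mul_cosh (z : ℝ) : ∫ u, exp (-z * cosh u) = 2 * besselK0 z := by
  have h := integral_comp_abs (f := fun u ↦ exp (-z * cosh u))
  simp only [cosh_abs] at h
  exact h

section Gumbel

variable {μ β : ℝ}

theorem maxGumbelPDF_nonneg (hβ : 0 ≤ β) (x : ℝ) : 0 ≤ maxGumbelPDF μ β x := by
  unfold maxGumbelPDF; positivity

theorem minGumbelPDF_nonneg (hβ : 0 ≤ β) (y : ℝ) : 0 ≤ minGumbelPDF μ β y := by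
  unfold minGumbelPDF; positivity

@[fun_prop]
theorem continuous_maxGumbelPDF : Continuous (maxGumbelPDF μ β) := by
  unfold maxGumbelPDF; fun_prop

@[fun_prop]
theorem continuous_minGumbelPDF : Continuous (minGumbelPDF μ β) := by
  unfold minGumbelPDF; fun_prop

theorem lintegral_Ioi_minGumbelPDF (hβ : 0 < β) (a : ℝ) :
    ∫⁻ y in Ioi a, ENNReal.ofReal (minGumbelPDF μ β y) =
      ENNReal.ofReal (exp (-exp ((a - μ) / β))) := by
  have hF : ∀ t ∈ Ici a, HasDerivAt (fun s ↦ exp ((s - μ) / β)) (exp ((t - μ) / β) / β) t :=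
    fun t _ ↦ by simpa [div_eq_mul_inv] using (((hasDerivAt_id t).sub_const μ).div_const β).exp
  have hlim : Tendsto (fun s ↦ exp ((s - μ) / β)) atTop atTop :=
    tendsto_exp_atTop.comp ((tendsto_atTop_add_const_right _ (-μ) tendsto_id).atTop_div_const hβ)
  rw [← lintegral_Ioi_deriv_mul_exp_neg hF (fun t _ ↦ by positivity) hlim]
  refine setLIntegral_congr_fun measurableSet_Ioi fun y _ ↦ ?_
  rw [minGumbelPDF, exp_sub, exp_neg]
  congr 1
  ring

noncomputable def gumbelKernel (b u : ℝ) : ℝ := exp (b + u) * exp (-(2 * exp b) * cosh u)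

theorem gumbelKernel_nonneg (b u : ℝ) : 0 ≤ gumbelKernel b u := by
  unfold gumbelKernel; positivity

theorem mul_maxGumbelPDF_mul_exp_neg_exp (hβ : β ≠ 0) (μx μy q u : ℝ) :
    β * (maxGumbelPDF μx β ((μx + μy - q) / 2 - β * u) *
      exp (-exp (((μx + μy - q) / 2 - β * u + q - μy) / β))) =
      gumbelKernel ((μx - μy + q) / (2 * β)) u := by
  set b := (μx - μy + q) / (2 * β) with hb
  have hx : -((μx + μy - q) / 2 - β * u - μx) / β = b + u := by rw [hb]; field_simp; ring
  have hy : ((μx + μy - q) / 2 - β * u + q - μy) / β = b - u := by rw [hb]; field_simp; ring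
  have hcosh : 2 * exp b * cosh u = exp (b + u) + exp (b - u) := by
    rw [cosh_eq, exp_add, exp_sub, exp_neg]; ring
  rw [maxGumbelPDF, gumbelKernel, hx, hy, neg_mul, hcosh, neg_add, exp_add (-_), exp_sub (b + u),
    exp_neg (exp (b + u))]
  field_simp

theorem lintegral_maxGumbelPDF_mul_exp_neg_exp (hβ : 0 < β) (μx μy q : ℝ) :
    ∫⁻ x, ENNReal.ofReal (maxGumbelPDF μx β x) * ENNReal.ofReal (exp (-exp ((x + q - μy) / β))) =
      ∫⁻ u, ENNReal.ofReal (gumbelKernel ((μx - μy + q) / (2 * β)) u) := by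
  set d := (μx + μy - q) / 2
  set ψ : ℝ → ℝ≥0∞ := fun x ↦
    ENNReal.ofReal (maxGumbelPDF μx β x) * ENNReal.ofReal (exp (-exp ((x + q - μy) / β)))
  have hψ : Measurable ψ := by fun_prop
  calc ∫⁻ x, ψ x = ∫⁻ v, ψ (d - v) := (lintegral_sub_left_eq_self ψ d).symm
    _ = ENNReal.ofReal β * ∫⁻ u, ψ (d - β * u) := by
      rw [lintegral_comp_mul_left hβ.ne' (φ := fun v ↦ ψ (d - v)) (by fun_prop), ← mul_assoc,
        ← ENNReal.ofReal_mul hβ.le, abs_inv, abs_of_pos hβ, mul_inv_cancel₀ hβ.ne',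
        ENNReal.ofReal_one, one_mul]
    _ = _ := by
      rw [← lintegral_const_mul _ (by fun_prop)]
      refine lintegral_congr fun u ↦ ?_
      simp only [ψ]
      rw [← ENNReal.ofReal_mul (maxGumbelPDF_nonneg hβ.le _), ← ENNReal.ofReal_mul hβ.le,
        mul_maxGumbelPDF_mul_exp_neg_exp hβ.ne']

@[fun_prop]
theorem continuous_gumbelKernel : Continuous fun p : ℝ × ℝ ↦ gumbelKernel p.1 p.2 := by
  unfold gumbelKernel; fun_prop

theorem gumbelKernel_add_gumbelKernel_neg (b u : ℝ) :
    gumbelKernel b u + gumbelKernel b (-u) = 2 * exp b * cosh u * exp (-(2 * exp b) * cosh u) := by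
  rw [gumbelKernel, gumbelKernel, cosh_neg, cosh_eq, exp_add, exp_add]
  ring

theorem lintegral_Ioi_gumbelKernel_add_gumbelKernel_neg (hβ : 0 < β) (c u : ℝ) :
    ∫⁻ q in Ioi 0, (ENNReal.ofReal (gumbelKernel ((c + q) / (2 * β)) u) +
      ENNReal.ofReal (gumbelKernel ((c + q) / (2 * β)) (-u))) =
      2 * (ENNReal.ofReal β * ENNReal.ofReal (exp (-(2 * exp (c / (2 * β))) * cosh u))) := by
  set F : ℝ → ℝ := fun q ↦ 2 * exp ((c + q) / (2 * β)) * cosh u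
  set F' : ℝ → ℝ := fun q ↦ exp ((c + q) / (2 * β)) * cosh u / β
  have hF : ∀ q ∈ Ici (0 : ℝ), HasDerivAt F (F' q) q := fun q _ ↦
    (((((hasDerivAt_id q).const_add c).div_const (2 * β)).exp.const_mul 2).mul_const
      (cosh u)).congr_deriv (by simp only [F', id]; field_simp)
  have hlim : Tendsto F atTop atTop :=
    ((tendsto_exp_atTop.comp ((tendsto_atTop_add_const_left _ c tendsto_id).atTop_div_const
      (by positivity))).const_mul_atTop two_pos).atTop_mul_const (cosh_pos u)
  have hpt : ∀ q, ENNReal.ofReal (gumbelKernel ((c + q) / (2 * β)) u) +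
      ENNReal.ofReal (gumbelKernel ((c + q) / (2 * β)) (-u)) =
      ENNReal.ofReal (2 * β) * ENNReal.ofReal (F' q * exp (-F q)) := fun q ↦ by
    rw [← ENNReal.ofReal_add (gumbelKernel_nonneg _ _) (gumbelKernel_nonneg _ _),
      ← ENNReal.ofReal_mul (by positivity), gumbelKernel_add_gumbelKernel_neg]
    congr 1
    simp only [F, F']
    field_simp
  rw [lintegral_congr hpt, lintegral_const_mul' _ _ ENNReal.ofReal_ne_top,
    lintegral_Ioi_deriv_mul_exp_neg hF (fun q _ ↦ by positivity) hlim,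
    ENNReal.ofReal_mul zero_le_two, ENNReal.ofReal_ofNat]
  simp only [F, add_zero, ← neg_mul]
  rw [mul_assoc]

theorem lintegral_Ioi_lintegral_gumbelKernel (hβ : 0 < β) (c : ℝ) :
    ∫⁻ q in Ioi 0, ∫⁻ u, ENNReal.ofReal (gumbelKernel ((c + q) / (2 * β)) u) =
      ENNReal.ofReal β * ∫⁻ u, ENNReal.ofReal (exp (-(2 * exp (c / (2 * β))) * cosh u)) := by
  rw [lintegral_lintegral_swap (by fun_prop), ← lintegral_const_mul _ (by fun_prop)]
  refine lintegral_eq_of_add_comp_neg ?_ fun u ↦ ?_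
  · exact Measurable.lintegral_prod_right' (f := fun p : ℝ × ℝ ↦
      ENNReal.ofReal (gumbelKernel ((c + p.2) / (2 * β)) p.1)) (by fun_prop)
  · rw [← lintegral_add_left (by fun_prop)]
    exact lintegral_Ioi_gumbelKernel_add_gumbelKernel_neg hβ c u

theorem lintegral_max_sub_mul_maxGumbelPDF_mul_minGumbelPDF (hβ : 0 < β) (μx μy : ℝ) :
    ∫⁻ p : ℝ × ℝ, ENNReal.ofReal
        (max (p.2 - p.1) 0 * maxGumbelPDF μx β p.1 * minGumbelPDF μy β p.2) =
      ENNReal.ofReal β *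
        ∫⁻ u, ENNReal.ofReal (exp (-(2 * exp ((μx - μy) / (2 * β))) * cosh u)) := by
  rw [lintegral_max_sub_mul_mul (by fun_prop) (by fun_prop) (maxGumbelPDF_nonneg hβ.le),
    ← lintegral_Ioi_lintegral_gumbelKernel hβ (μx - μy)]
  simp_rw [lintegral_Ioi_minGumbelPDF hβ, ← lintegral_const_mul' _ _ ENNReal.ofReal_ne_top]
  rw [lintegral_lintegral_swap (by fun_prop)]
  simp_rw [lintegral_maxGumbelPDF_mul_exp_neg_exp hβ]

end Gumbel

/-- Expected length of the interval [X, Y], for independent X ~ MaxGumbel(μx, β)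
and Y ~ MinGumbel(μy, β): E[max(Y - X, 0)] = 2β·K₀(2e^{(μx-μy)/(2β)}). -/
theorem expected_gumbel_interval_length (β μx μy : ℝ) (hβ : 0 < β) :
    (∫ p : ℝ × ℝ, max (p.2 - p.1) 0 * maxGumbelPDF μx β p.1 * minGumbelPDF μy β p.2) =
      2 * β * besselK0 (2 * Real.exp ((μx - μy) / (2 * β))) := by
  have hnonneg : ∀ p : ℝ × ℝ,
      0 ≤ max (p.2 - p.1) 0 * maxGumbelPDF μx β p.1 * minGumbelPDF μy β p.2 := fun p ↦
    mul_nonneg (mul_nonneg (le_max_right _ _) (maxGumbelPDF_nonneg hβ.le _))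
      (minGumbelPDF_nonneg hβ.le _)
  rw [integral_eq_lintegral_of_nonneg_ae (Eventually.of_forall hnonneg) (by fun_prop),
    lintegral_max_sub_mul_maxGumbelPDF_mul_minGumbelPDF hβ,
    ← ofReal_integral_eq_lintegral_ofReal (integrable_exp_neg_mul_cosh (by positivity))
      (Eventually.of_forall fun _ ↦ (exp_pos _).le),
    ← ENNReal.ofReal_mul hβ.le,
    ENNReal.toReal_ofReal (mul_nonneg hβ.le (integral_nonneg fun _ ↦ (exp_pos _).le)),
    integral_exp_neg_mul_cosh]
  ring
end

section
/- For all real a, b and β > 0, ∫_{-∞}^{∞} exp(-e^{(t-a)/β} - e^{-(t-b)/β}) dt = 2β·K₀(2·e^{(b-a)/(2β)}), where for any z > 0, K₀(z) = ∫₀^∞ exp(-z·cosh u) du. -/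
open MeasureTheory

/-- ∫_{-∞}^{∞} exp(-e^{(t-a)/β} - e^{-(t-b)/β}) dt = 2β·K₀(2·e^{(b-a)/(2β)}). -/
theorem integral_exp_exp_eq_besselK0 (a b β : ℝ) (hβ : 0 < β) :
    (∫ t : ℝ, Real.exp (-Real.exp ((t - a) / β) - Real.exp (-(t - b) / β))) =
      2 * β * besselK0 (2 * Real.exp ((b - a) / (2 * β))) := by
  have hβ' : β ≠ 0 := hβ.ne'
  set f : ℝ → ℝ := fun t => Real.exp (-Real.exp ((t - a) / β) - Real.exp (-(t - b) / β)) with hf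
  set z : ℝ := 2 * Real.exp ((b - a) / (2 * β)) with hz
  set m : ℝ := (a + b) / 2 with hm
  have key : ∀ u : ℝ, f (β * u + m) = Real.exp (-z * Real.cosh u) := by
    intro u
    have h1 : (β * u + m - a) / β = u + (b - a) / (2 * β) := by
      field_simp [hm]; ring
    have h2 : -(β * u + m - b) / β = -u + (b - a) / (2 * β) := by
      field_simp [hm]; ring
    simp only [hf, h1, h2, Real.exp_add]
    congr 1
    rw [hz, Real.cosh_eq]
    ring
  have step1 : (∫ u : ℝ, f (β * u + m)) = |β⁻¹| • ∫ t : ℝ, f (t + m) :=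
    MeasureTheory.Measure.integral_comp_mul_left (fun t => f (t + m)) β
  have step2 : (∫ t : ℝ, f (t + m)) = ∫ t : ℝ, f t :=
    integral_add_right_eq_self f m
  have step3 : (∫ u : ℝ, f (β * u + m)) = ∫ u : ℝ, Real.exp (-z * Real.cosh u) := by
    simp_rw [key]
  have step4 : (∫ u : ℝ, Real.exp (-z * Real.cosh u)) = 2 * besselK0 z := by
    have habs : ∀ u : ℝ, Real.exp (-z * Real.cosh |u|) = Real.exp (-z * Real.cosh u) := by
      intro u
      rcases abs_cases u with ⟨h, _⟩ | ⟨h, _⟩ <;> rw [h]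
      rw [Real.cosh_neg]
    calc (∫ u : ℝ, Real.exp (-z * Real.cosh u))
        = ∫ u : ℝ, Real.exp (-z * Real.cosh |u|) := by simp_rw [habs]
      _ = 2 * ∫ u in Set.Ioi (0 : ℝ), Real.exp (-z * Real.cosh u) :=
          integral_comp_abs (f := fun u => Real.exp (-z * Real.cosh u))
      _ = 2 * besselK0 z := rfl
  have habsβ : |β⁻¹| = β⁻¹ := abs_of_pos (inv_pos.mpr hβ)
  have : (2 : ℝ) * besselK0 z = β⁻¹ * ∫ t : ℝ, f t := by
    rw [← step4, ← step3, step1, step2, habsβ, smul_eq_mul]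
  calc (∫ t : ℝ, f t) = β * (β⁻¹ * ∫ t : ℝ, f t) := by
        rw [← mul_assoc, mul_inv_cancel₀ hβ', one_mul]
    _ = β * (2 * besselK0 z) := by rw [← this]
    _ = 2 * β * besselK0 z := by ring
end

section
/- Let X ~ MaxGumbel(μx, β) and Y ~ MinGumbel(μy, β) be independent. Then E[max(Y - X, 0)] = E[Y·F_max(Y; μx)] - E[X·F_max(-X; -μy)], where F_max(z; μ) = exp(-e^{-(z-μ)/β}) is the MaxGumbel CDF. -/
open MeasureTheory

/-- CDF of MaxGumbel(μ, β). -/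
noncomputable def maxGumbelCDF (μ β z : ℝ) : ℝ :=
  Real.exp (-Real.exp (-(z - μ) / β))

/-!
Writing max (y - x) 0 = (y - x)·1{x < y} and integrating out the other variable in each of the
two terms (Fubini in both orders) gives E[Y·P(X < Y | Y)] - E[X·P(Y > X | X)]. The first
conditional probability is the MaxGumbel CDF; the reflection y ↦ -y maps MinGumbel(μ, β) to
MaxGumbel(-μ, β), so the second is F_max(-x; -μy). Integrability of the densities and first
moments comes from exp (t - eᵗ) ≤ exp (-|t|).
-/

open Set Filter Real Topology

theorem integral_max_sub_zero_mul_mul {f g : ℝ → ℝ} (hf : Integrable f) (hg : Integrable g)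
    (hf₁ : Integrable fun x => x * f x) (hg₁ : Integrable fun y => y * g y) :
    ∫ p : ℝ × ℝ, max (p.2 - p.1) 0 * f p.1 * g p.2 =
      (∫ y, y * (∫ x in Iio y, f x) * g y) - ∫ x, x * (∫ y in Ioi x, g y) * f x := by
  set S := {p : ℝ × ℝ | p.1 < p.2}
  have hS : MeasurableSet S := measurableSet_lt measurable_fst measurable_snd
  have h₁ : Integrable (S.indicator fun p => f p.1 * (p.2 * g p.2)) (volume.prod volume) :=
    (hf.mul_prod hg₁).indicator hS
  have h₂ : Integrable (S.indicator fun p => p.1 * f p.1 * g p.2) (volume.prod volume) :=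
    (hf₁.mul_prod hg).indicator hS
  have hsplit (p : ℝ × ℝ) : max (p.2 - p.1) 0 * f p.1 * g p.2 =
      S.indicator (fun p => f p.1 * (p.2 * g p.2)) p -
        S.indicator (fun p => p.1 * f p.1 * g p.2) p := by
    by_cases h : p.1 < p.2
    · simp only [S, indicator_of_mem (show p ∈ S from h), max_eq_left (sub_nonneg.2 h.le)]
      ring
    · simp only [S, indicator_of_notMem (show p ∉ S from h),
        max_eq_right (sub_nonpos.2 (not_lt.1 h))]
      ring
  rw [Measure.volume_eq_prod, integral_congr_ae (ae_of_all _ hsplit), integral_sub h₁ h₂,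
    integral_prod_symm _ h₁, integral_prod _ h₂]
  congr 1 <;> refine integral_congr_ae (ae_of_all _ fun z => ?_)
  · have : (fun x => S.indicator (fun p => f p.1 * (p.2 * g p.2)) (x, z)) =
        (Iio z).indicator fun x => f x * (z * g z) := by
      ext x; simp [S, indicator_apply]
    simp only [this, integral_indicator measurableSet_Iio, integral_mul_const]
    ring
  · have : (fun y => S.indicator (fun p => p.1 * f p.1 * g p.2) (z, y)) =
        (Ioi z).indicator fun y => z * f z * g y := by
      ext y; simp [S, indicator_apply]
    simp only [this, integral_indicator measurableSet_Ioi, integral_const_mul]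
    ring

lemma integrable_comp_abs_of_integrableOn_Ici {g : ℝ → ℝ} (hg : IntegrableOn g (Ici 0)) :
    Integrable fun x => g |x| := by
  have hIci : IntegrableOn (fun x => g |x|) (Ici (-0)) := by
    rw [neg_zero]
    exact hg.congr_fun (fun x hx => by rw [abs_of_nonneg hx]) measurableSet_Ici
  have hIic : IntegrableOn (fun x => g |x|) (Iic 0) := by
    simpa only [abs_neg] using hIci.comp_neg_Iic
  rw [neg_zero] at hIci
  have h := hIic.union hIci
  rwa [Iic_union_Ici, integrableOn_univ] at h

lemma integrable_one_add_abs_mul_exp_neg_abs :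
    Integrable fun t : ℝ => (1 + |t|) * exp (-|t|) := by
  refine integrable_comp_abs_of_integrableOn_Ici (g := fun t => (1 + t) * exp (-t)) ?_
  rw [integrableOn_Ici_iff_integrableOn_Ioi]
  have h := integrableOn_rpow_mul_exp_neg_rpow (s := 1) (p := 1) (by norm_num) one_pos
  simp only [rpow_one] at h
  exact ((integrableOn_exp_neg_Ioi 0).add h).congr_fun
    (fun t _ => by simp only [Pi.add_apply]; ring) measurableSet_Ioi

lemma exp_sub_exp_le_exp_neg_abs (t : ℝ) : exp (t - exp t) ≤ exp (-|t|) := by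
  refine exp_le_exp.2 ?_
  rcases le_total t 0 with ht | ht
  · rw [abs_of_nonpos ht, neg_neg]
    linarith [exp_pos t]
  · rw [abs_of_nonneg ht]
    nlinarith [quadratic_le_exp_of_nonneg ht, sq_nonneg (t - 1)]

lemma integrable_exp_sub_exp : Integrable fun t : ℝ => exp (t - exp t) := by
  refine integrable_one_add_abs_mul_exp_neg_abs.mono' (by fun_prop) (ae_of_all _ fun t => ?_)
  rw [norm_of_nonneg (exp_pos _).le]
  nlinarith [exp_sub_exp_le_exp_neg_abs t, abs_nonneg t, exp_pos (-|t|)]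

lemma integrable_mul_exp_sub_exp : Integrable fun t : ℝ => t * exp (t - exp t) := by
  refine integrable_one_add_abs_mul_exp_neg_abs.mono' (by fun_prop) (ae_of_all _ fun t => ?_)
  rw [norm_mul, norm_of_nonneg (exp_pos _).le, norm_eq_abs]
  nlinarith [exp_sub_exp_le_exp_neg_abs t, abs_nonneg t, exp_pos (-|t|), exp_pos (t - exp t)]

lemma maxGumbelPDF_neg (μ β x : ℝ) : maxGumbelPDF (-μ) β (-x) = minGumbelPDF μ β x := by
  simp only [maxGumbelPDF, minGumbelPDF, sub_neg_eq_add, neg_add_eq_sub, neg_sub]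

lemma integrable_minGumbelPDF (μ : ℝ) {β : ℝ} (hβ : β ≠ 0) : Integrable (minGumbelPDF μ β) :=
  ((integrable_exp_sub_exp.comp_div hβ).comp_sub_right μ).const_mul (1 / β)

lemma integrable_mul_minGumbelPDF (μ : ℝ) {β : ℝ} (hβ : β ≠ 0) :
    Integrable fun y => y * minGumbelPDF μ β y := by
  refine (((integrable_mul_exp_sub_exp.comp_div hβ).comp_sub_right μ).add
    ((integrable_minGumbelPDF μ hβ).const_mul μ)).congr (ae_of_all _ fun y => ?_)
  simp only [Pi.add_apply, minGumbelPDF]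
  field_simp
  ring

lemma integrable_maxGumbelPDF (μ : ℝ) {β : ℝ} (hβ : β ≠ 0) : Integrable (maxGumbelPDF μ β) := by
  simpa [← maxGumbelPDF_neg] using (integrable_minGumbelPDF (-μ) hβ).comp_neg

lemma integrable_mul_maxGumbelPDF (μ : ℝ) {β : ℝ} (hβ : β ≠ 0) :
    Integrable fun x => x * maxGumbelPDF μ β x := by
  simpa [← maxGumbelPDF_neg] using (integrable_mul_minGumbelPDF (-μ) hβ).comp_neg.neg

lemma hasDerivAt_maxGumbelCDF (μ β x : ℝ) :
    HasDerivAt (maxGumbelCDF μ β) (maxGumbelPDF μ β x) x := by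
  have h : HasDerivAt (maxGumbelCDF μ β)
      (exp (-exp (-(x - μ) / β)) * -(exp (-(x - μ) / β) * (-1 / β))) x :=
    (((hasDerivAt_id' x).sub_const μ).neg.div_const β).exp.neg.exp
  refine h.congr_deriv ?_
  simp only [maxGumbelPDF, exp_sub, exp_neg]
  ring

lemma tendsto_maxGumbelCDF_atBot (μ : ℝ) {β : ℝ} (hβ : 0 < β) :
    Tendsto (maxGumbelCDF μ β) atBot (𝓝 0) := by
  have h : Tendsto (fun z : ℝ => -(z - μ) / β) atBot atTop :=
    (tendsto_neg_atBot_atTop.comp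
      (tendsto_atBot_add_const_right _ (-μ) tendsto_id)).atTop_div_const hβ
  exact tendsto_exp_atBot.comp (tendsto_neg_atTop_atBot.comp (tendsto_exp_atTop.comp h))

lemma integral_Iic_maxGumbelPDF (μ : ℝ) {β : ℝ} (hβ : 0 < β) (y : ℝ) :
    ∫ x in Iic y, maxGumbelPDF μ β x = maxGumbelCDF μ β y := by
  rw [integral_Iic_of_hasDerivAt_of_tendsto' (fun x _ => hasDerivAt_maxGumbelCDF μ β x)
    (integrable_maxGumbelPDF μ hβ.ne').integrableOn (tendsto_maxGumbelCDF_atBot μ hβ), sub_zero]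

lemma integral_Ioi_minGumbelPDF (μ : ℝ) {β : ℝ} (hβ : 0 < β) (x : ℝ) :
    ∫ y in Ioi x, minGumbelPDF μ β y = maxGumbelCDF (-μ) β (-x) := by
  simp only [← maxGumbelPDF_neg, integral_comp_neg_Ioi, integral_Iic_maxGumbelPDF _ hβ]

/-- For independent X ~ MaxGumbel(μx, β) and Y ~ MinGumbel(μy, β),
E[max(Y - X, 0)] = E[Y·F_max(Y; μx)] - E[X·F_max(-X; -μy)]. -/
theorem expected_interval_length_as_difference (β μx μy : ℝ) (hβ : 0 < β) :
    (∫ p : ℝ × ℝ, max (p.2 - p.1) 0 * maxGumbelPDF μx β p.1 * minGumbelPDF μy β p.2) =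
      (∫ y : ℝ, y * maxGumbelCDF μx β y * minGumbelPDF μy β y) -
      (∫ x : ℝ, x * maxGumbelCDF (-μy) β (-x) * maxGumbelPDF μx β x) := by
  rw [integral_max_sub_zero_mul_mul (integrable_maxGumbelPDF μx hβ.ne')
    (integrable_minGumbelPDF μy hβ.ne') (integrable_mul_maxGumbelPDF μx hβ.ne')
    (integrable_mul_minGumbelPDF μy hβ.ne')]
  simp only [← integral_Iic_eq_integral_Iio, integral_Iic_maxGumbelPDF μx hβ,
    integral_Ioi_minGumbelPDF μy hβ]
end

section
/- The function m(x) = 2β·K₀(2e^{-x/(2β)}) converges pointwise to max(x, 0) as β → 0⁺, for every fixed x ∈ ℝ. -/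
/-!
With ε = 2β, the substitution u = t / ε and 2e^{-x/ε} cosh u = e^{(t-x)/ε} + e^{-(t+x)/ε} give
ε · K₀(2e^{-x/ε}) = ∫_{t>0} exp(-(e^{(t-x)/ε} + e^{-(t+x)/ε})) dt.
As ε → 0⁺ the integrand tends to 1 for 0 < t < x and to 0 for t > x, and for ε ≤ 1 it is
dominated by e^{x-t}; dominated convergence leaves the length of (0, x), which is max(x, 0).
-/

open MeasureTheory Filter

open Set Real Topology

lemma tendsto_exp_div_nhdsGT_zero_of_neg {c : ℝ} (hc : c < 0) :
    Tendsto (fun ε : ℝ => exp (c / ε)) (𝓝[>] 0) (𝓝 0) := by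
  simp only [div_eq_mul_inv]
  exact tendsto_exp_atBot.comp (tendsto_inv_nhdsGT_zero.const_mul_atTop_of_neg hc)

lemma tendsto_exp_neg_exp_div_nhdsGT_zero {c : ℝ} (hc : 0 < c) :
    Tendsto (fun ε : ℝ => exp (-exp (c / ε))) (𝓝[>] 0) (𝓝 0) := by
  simp only [div_eq_mul_inv]
  exact tendsto_exp_atBot.comp <| tendsto_neg_atTop_atBot.comp <|
    tendsto_exp_atTop.comp (tendsto_inv_nhdsGT_zero.const_mul_atTop hc)

lemma exp_neg_exp_le_exp_neg (s : ℝ) : exp (-exp s) ≤ exp (-s) :=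
  exp_le_exp.2 (by linarith [add_one_le_exp s])

noncomputable def besselK0Integrand (x ε t : ℝ) : ℝ :=
  exp (-(exp ((t - x) / ε) + exp (-(t + x) / ε)))

lemma besselK0Integrand_le_exp_neg_exp (x ε t : ℝ) :
    besselK0Integrand x ε t ≤ exp (-exp ((t - x) / ε)) :=
  exp_le_exp.2 (by linarith [exp_pos (-(t + x) / ε)])

lemma besselK0Integrand_le_one (x ε t : ℝ) : besselK0Integrand x ε t ≤ 1 :=
  exp_le_one_iff.2 (by linarith [exp_pos ((t - x) / ε), exp_pos (-(t + x) / ε)])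

lemma besselK0Integrand_le_exp_sub {x ε : ℝ} (hε₀ : 0 < ε) (hε₁ : ε ≤ 1) (t : ℝ) :
    besselK0Integrand x ε t ≤ exp (x - t) := by
  rcases le_or_gt t x with htx | hxt
  · exact (besselK0Integrand_le_one x ε t).trans (one_le_exp (by linarith))
  · calc besselK0Integrand x ε t ≤ exp (-exp ((t - x) / ε)) :=
          besselK0Integrand_le_exp_neg_exp x ε t
      _ ≤ exp (-((t - x) / ε)) := exp_neg_exp_le_exp_neg _
      _ ≤ exp (x - t) := exp_le_exp.2 (by
          linarith [le_div_self (by linarith : 0 ≤ t - x) hε₀ hε₁])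

lemma tendsto_besselK0Integrand_of_lt {x t : ℝ} (ht : 0 < t) (htx : t < x) :
    Tendsto (fun ε => besselK0Integrand x ε t) (𝓝[>] 0) (𝓝 1) := by
  have h := ((tendsto_exp_div_nhdsGT_zero_of_neg (by linarith : t - x < 0)).add
    (tendsto_exp_div_nhdsGT_zero_of_neg (by linarith : -(t + x) < 0))).neg
  rw [show (1 : ℝ) = exp (-(0 + 0)) by simp]
  exact (continuous_exp.tendsto _).comp h

lemma tendsto_besselK0Integrand_of_gt {x t : ℝ} (hxt : x < t) :
    Tendsto (fun ε => besselK0Integrand x ε t) (𝓝[>] 0) (𝓝 0) :=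
  squeeze_zero (fun _ => (exp_pos _).le) (fun ε => besselK0Integrand_le_exp_neg_exp x ε t)
    (tendsto_exp_neg_exp_div_nhdsGT_zero (by linarith))

lemma mul_besselK0_eq_integral (x : ℝ) {ε : ℝ} (hε : 0 < ε) :
    ε * besselK0 (2 * exp (-x / ε)) = ∫ t in Ioi 0, besselK0Integrand x ε t := by
  have hsub : ∀ u, exp (-(2 * exp (-x / ε)) * cosh u) = besselK0Integrand x ε (ε * u) := by
    intro u
    have h₁ : (ε * u - x) / ε = u + -x / ε := by field_simp; ring
    have h₂ : -(ε * u + x) / ε = -u + -x / ε := by field_simp; ring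
    rw [besselK0Integrand, h₁, h₂, exp_add, exp_add, cosh_eq]
    ring_nf
  rw [besselK0, funext hsub, integral_comp_mul_left_Ioi _ 0 hε, mul_zero, smul_eq_mul,
    mul_inv_cancel_left₀ hε.ne']

lemma setIntegral_Ioi_zero_indicator_Iio (x : ℝ) :
    ∫ t in Ioi 0, (Iio x).indicator (fun _ => (1 : ℝ)) t = max x 0 := by
  rw [integral_indicator measurableSet_Iio, Measure.restrict_restrict measurableSet_Iio,
    Iio_inter_Ioi, setIntegral_const, Real.volume_real_Ioo, smul_eq_mul, mul_one, sub_zero]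

lemma tendsto_integral_besselK0Integrand (x : ℝ) :
    Tendsto (fun ε => ∫ t in Ioi 0, besselK0Integrand x ε t) (𝓝[>] 0) (𝓝 (max x 0)) := by
  rw [← setIntegral_Ioi_zero_indicator_Iio]
  refine tendsto_integral_filter_of_dominated_convergence (fun t => exp (x - t)) ?_ ?_ ?_ ?_
  · exact .of_forall fun ε =>
      (Continuous.aestronglyMeasurable (by unfold besselK0Integrand; fun_prop))
  · filter_upwards [Ioc_mem_nhdsGT (zero_lt_one' ℝ)] with ε ⟨hε₀, hε₁⟩
    exact .of_forall fun t =>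
      (norm_of_nonneg (exp_pos _).le).trans_le (besselK0Integrand_le_exp_sub hε₀ hε₁ t)
  · simpa only [sub_eq_add_neg, exp_add] using (integrableOn_exp_neg_Ioi 0).const_mul (exp x)
  · filter_upwards [ae_restrict_mem measurableSet_Ioi, Measure.ae_ne _ x] with t (ht : 0 < t) htx
    rcases htx.lt_or_gt with htx | hxt
    · simpa [htx] using tendsto_besselK0Integrand_of_lt ht htx
    · simpa [hxt.not_gt] using tendsto_besselK0Integrand_of_gt hxt

lemma tendsto_mul_besselK0 (x : ℝ) :
    Tendsto (fun ε => ε * besselK0 (2 * exp (-x / ε))) (𝓝[>] 0) (𝓝 (max x 0)) :=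
  (tendsto_integral_besselK0Integrand x).congr' <|
    eventually_mem_nhdsWithin.mono fun _ hε => (mul_besselK0_eq_integral x hε).symm

/-- m(x) = 2β·K₀(2e^{-x/(2β)}) converges pointwise to max(x, 0) as β → 0⁺. -/
theorem gumbel_volume_tendsto_hinge (x : ℝ) :
    Tendsto (fun β : ℝ => 2 * β * besselK0 (2 * Real.exp (-x / (2 * β))))
      (nhdsWithin 0 (Set.Ioi 0)) (nhds (max x 0)) := by
  exact (tendsto_mul_besselK0 x).comp <|
    tendsto_comap.mono_left (comap_mulLeft_nhdsGT_zero two_pos).ge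
end
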